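/- Let R be a finite dimensional local commutative k-algebra, Q an acyclic quiver, and Λ = R⊗_k kQ ≅ RQ. If M is an exceptional kQ-module (indecomposable, End_{kQ}(M) ≅ k, Ext^1_{kQ}(M,M)=0), then the induced Λ-module X = Λ⊗_{kQ}M is an R-exceptional RQ-lattice: X is finitely generated projective as an R-module, Ext^1_Λ(X,X) = 0, and End_Λ(X) ≅ R. -/

import Mathlib

open TensorProduct LinearMap

set_option maxHeartbeats 1000000
set_option synthInstance.maxHeartbeats 400000

noncomputable section

section Basic
variable (A : Type) [Ring A]

/-- Every `A`-linear map from `M` to `N` is zero, i.e. `Hom_A(M,N) = 0`. -/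
def HomZero (M N : Type) [AddCommGroup M] [Module A M] [AddCommGroup N] [Module A N] : Prop :=
  ∀ f : M →ₗ[A] N, f = 0

/-- `Ext¹_A(M, N) = 0`: every short exact sequence `0 → N → E → M → 0` of `A`-modules
splits. -/
def Ext1Vanishes (M N : Type) [AddCommGroup M] [Module A M] [AddCommGroup N] [Module A N] :
    Prop :=
  ∀ (E : Type) [AddCommGroup E] [Module A E], ∀ (i : N →ₗ[A] E) (p : E →ₗ[A] M),
    Function.Injective i → Function.Surjective p → LinearMap.range i = LinearMap.ker p →
    ∃ s : M →ₗ[A] E, p ∘ₗ s = LinearMap.id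

/-- `N` is generated by `M`: `N` is a quotient of a finite direct sum of copies of `M`. -/
def GenBy (M N : Type) [AddCommGroup M] [Module A M] [AddCommGroup N] [Module A N] : Prop :=
  ∃ (n : ℕ) (p : (Fin n → M) →ₗ[A] N), Function.Surjective p

/-- `M` is an indecomposable `A`-module: it is nonzero and its only idempotent
endomorphisms are `0` and the identity. -/
def IndecomposableMod (M : Type) [AddCommGroup M] [Module A M] : Prop :=
  Nontrivial M ∧ ∀ e : M →ₗ[A] M, e ∘ₗ e = e → e = 0 ∨ e = LinearMap.id

/-- A surjection from a projective module with projective kernel. -/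
structure ProjPresentation1 (M : Type) [AddCommGroup M] [Module A M] where
  P : Type
  [acg : AddCommGroup P]
  [mod : Module A P]
  proj : Module.Projective A P
  p : P →ₗ[A] M
  surj : Function.Surjective p
  ker_proj : Module.Projective A (LinearMap.ker p)

attribute [instance] ProjPresentation1.acg ProjPresentation1.mod

/-- `M` has projective dimension at most one over `A`. -/
def PdLE1 (M : Type) [AddCommGroup M] [Module A M] : Prop :=
  Nonempty (ProjPresentation1 A M)

end Basic

section ExtLemmas
variable {A : Type} [Ring A]
variable {M N N' : Type} [AddCommGroup M] [Module A M] [AddCommGroup N] [Module A N]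
  [AddCommGroup N'] [Module A N']

theorem ext1_of_equiv (h : Ext1Vanishes A M N) (e : N' ≃ₗ[A] N) : Ext1Vanishes A M N' := by
  intro E _ _ i p hi hp hr
  refine h E (i ∘ₗ (e.symm : N →ₗ[A] N')) p (hi.comp e.symm.injective) hp ?_
  rw [← hr]
  ext x
  constructor
  · rintro ⟨n, rfl⟩; exact ⟨e.symm n, rfl⟩
  · rintro ⟨n, rfl⟩; exact ⟨e n, by simp⟩

theorem ext1_subsingleton [Subsingleton N] : Ext1Vanishes A M N := by
  intro E _ _ i p hi hp hr
  have hker : LinearMap.ker p = ⊥ := by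
    rw [← hr]
    ext x
    simp only [LinearMap.mem_range, Submodule.mem_bot]
    constructor
    · rintro ⟨n, rfl⟩; rw [Subsingleton.elim n 0, map_zero]
    · rintro rfl; exact ⟨0, map_zero i⟩
  have hbij : Function.Bijective p := ⟨LinearMap.ker_eq_bot.mp hker, hp⟩
  exact ⟨(LinearEquiv.ofBijective p hbij).symm, by
    ext m; exact (LinearEquiv.ofBijective p hbij).apply_symm_apply m⟩

theorem ext1_prod (h : Ext1Vanishes A M N) (h' : Ext1Vanishes A M N') :
    Ext1Vanishes A M (N × N') := by
  intro E _ _ i p hi hp hr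
  -- quotient by i(0 × N')
  set S : Submodule A E := LinearMap.range (i ∘ₗ LinearMap.inr A N N') with hS
  have hSle : S ≤ LinearMap.ker p := by
    rintro x ⟨n', rfl⟩
    have : (i ∘ₗ LinearMap.inr A N N') n' ∈ LinearMap.range i := ⟨_, rfl⟩
    rw [hr] at this; exact this
  set q : E →ₗ[A] E ⧸ S := S.mkQ with hq
  set pbar : E ⧸ S →ₗ[A] M := S.liftQ p hSle with hpbar
  set ibar : N →ₗ[A] E ⧸ S := q ∘ₗ i ∘ₗ LinearMap.inl A N N' with hibar
  have hibar_inj : Function.Injective ibar := by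
    intro n₁ n₂ hn
    simp only [hibar, LinearMap.comp_apply, LinearMap.inl_apply] at hn
    have hz : q (i ((n₁, (0:N')) - (n₂, 0))) = 0 := by
      rw [map_sub, map_sub, hn, sub_self]
    have hd : ((n₁, (0:N')) - (n₂, 0)) = ((n₁ - n₂ : N), (0:N')) := by
      simp [Prod.ext_iff]
    rw [hd, hq, Submodule.mkQ_apply, Submodule.Quotient.mk_eq_zero] at hz
    obtain ⟨n', hn'⟩ := hz
    simp only [LinearMap.comp_apply, LinearMap.inr_apply] at hn'
    have := hi hn'
    have h1 : n₁ - n₂ = 0 := by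
      have := congrArg Prod.fst this
      simpa using this.symm
    exact sub_eq_zero.mp h1
  have hpbar_surj : Function.Surjective pbar := by
    intro m
    obtain ⟨e, rfl⟩ := hp m
    exact ⟨q e, rfl⟩
  have hrange : LinearMap.range ibar = LinearMap.ker pbar := by
    ext x
    constructor
    · rintro ⟨n, rfl⟩
      have : i (n, 0) ∈ LinearMap.ker p := by
        rw [← hr]; exact ⟨_, rfl⟩
      simpa [hibar, hpbar, hq] using this
    · intro hx
      obtain ⟨e, rfl⟩ := S.mkQ_surjective x
      have hpe : p e = 0 := hx
      have : e ∈ LinearMap.ker p := hpe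
      rw [← hr] at this
      obtain ⟨⟨n, n'⟩, rfl⟩ := this
      refine ⟨n, ?_⟩
      simp only [hibar, LinearMap.comp_apply, LinearMap.inl_apply, hq, Submodule.mkQ_apply]
      rw [Submodule.Quotient.eq]
      refine ⟨-n', ?_⟩
      simp only [LinearMap.comp_apply, LinearMap.inr_apply]
      rw [← map_sub]
      congr 1
      simp [Prod.ext_iff]
  obtain ⟨sbar, hsbar⟩ := h (E ⧸ S) ibar pbar hibar_inj hpbar_surj hrange
  -- pull back along sbar
  set F : Submodule A E := Submodule.comap q (LinearMap.range sbar) with hF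
  set i' : N' →ₗ[A] F :=
    LinearMap.codRestrict F (i ∘ₗ LinearMap.inr A N N') (by
      intro n'
      simp only [hF, Submodule.mem_comap, LinearMap.comp_apply]
      have hz : q (i ((LinearMap.inr A N N') n')) = 0 := by
        rw [hq, Submodule.mkQ_apply, Submodule.Quotient.mk_eq_zero]
        exact ⟨n', rfl⟩
      rw [hz]
      exact zero_mem _) with hi'
  set p' : F →ₗ[A] M := p ∘ₗ F.subtype with hp'
  have hi'_inj : Function.Injective i' := by
    intro a b hab
    have : i (LinearMap.inr A N N' a) = i (LinearMap.inr A N N' b) := congrArg Subtype.val hab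
    have := hi this
    simpa [Prod.ext_iff] using this
  have hp'_surj : Function.Surjective p' := by
    intro m
    obtain ⟨e, he⟩ := S.mkQ_surjective (sbar m)
    have heF : e ∈ F := by
      simp only [hF, Submodule.mem_comap]
      rw [show q e = sbar m from he]
      exact ⟨m, rfl⟩
    refine ⟨⟨e, heF⟩, ?_⟩
    have h1 : pbar (q e) = p e := rfl
    have h2 : pbar (sbar m) = m := by
      have := congrFun (congrArg DFunLike.coe hsbar) m
      simpa using this
    show p e = m
    rw [← h1, show q e = sbar m from he, h2]
  have hrange' : LinearMap.range i' = LinearMap.ker p' := by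
    ext x
    constructor
    · rintro ⟨n', rfl⟩
      show p (i (LinearMap.inr A N N' n')) = 0
      have : i (LinearMap.inr A N N' n') ∈ LinearMap.ker p := by
        rw [← hr]; exact ⟨_, rfl⟩
      exact this
    · intro hx
      obtain ⟨e, heF⟩ := x
      have hpe : p e = 0 := hx
      have hqe : e ∈ F := heF
      simp only [hF, Submodule.mem_comap] at hqe
      obtain ⟨m', hm'⟩ := hqe
      have : m' = 0 := by
        have h2 : pbar (sbar m') = m' := by
          have := congrFun (congrArg DFunLike.coe hsbar) m'
          simpa using this
        rw [hm'] at h2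
        have : pbar (q e) = p e := rfl
        rw [this, hpe] at h2
        exact h2.symm
      rw [this, map_zero] at hm'
      have : e ∈ S := by
        rw [← Submodule.Quotient.mk_eq_zero]
        exact hm'.symm
      obtain ⟨n', hn'⟩ := this
      refine ⟨n', ?_⟩
      apply Subtype.ext
      exact hn'
  obtain ⟨s', hs'⟩ := h' F i' p' hi'_inj hp'_surj hrange'
  refine ⟨F.subtype ∘ₗ s', ?_⟩
  ext m
  have := congrFun (congrArg DFunLike.coe hs') m
  exact this

/-- The linear equivalence `(Fin (n+1) → M) ≃ M × (Fin n → M)`. -/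
def piSuccEquiv (n : ℕ) : (Fin (n + 1) → M) ≃ₗ[A] M × (Fin n → M) where
  toFun f := (f 0, fun i => f i.succ)
  invFun x := Fin.cons x.1 x.2
  map_add' f g := rfl
  map_smul' c f := rfl
  left_inv f := by
    show Fin.cons (f 0) (fun i => f i.succ) = f
    funext i
    refine Fin.cases ?_ ?_ i
    · exact Fin.cons_zero _ _
    · intro j; exact Fin.cons_succ _ _ j
  right_inv x := by
    obtain ⟨a, g⟩ := x
    show ((Fin.cons a g : Fin (n+1) → M) 0, fun i => (Fin.cons a g : Fin (n+1) → M) i.succ)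
      = (a, g)
    simp

theorem ext1_pi (h : Ext1Vanishes A M M) (n : ℕ) : Ext1Vanishes A M (Fin n → M) := by
  induction n with
  | zero => exact ext1_subsingleton
  | succ n ih =>
      exact ext1_of_equiv (N' := Fin (n+1) → M)
        (ext1_prod h ih) (piSuccEquiv n)

end ExtLemmas

section Tensor
variable (k : Type) [Field k] (R : Type) [CommRing R] [Algebra k R]
  (B : Type) [Ring B] [Algebra k B]
variable (M : Type) [AddCommGroup M] [Module k M] [Module B M] [IsScalarTower k B M]

/-- The action of `b : B` on `M`, as a `k`-linear map. -/
def actB (b : B) : M →ₗ[k] M where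
  toFun m := b • m
  map_add' := smul_add b
  map_smul' c m := by
    simp only [RingHom.id_apply]
    rw [← IsScalarTower.algebraMap_smul B c m, ← mul_smul, ← Algebra.commutes,
      mul_smul, IsScalarTower.algebraMap_smul]

/-- `B` acts on `R ⊗[k] M` through the second factor. -/
def toEndB : B →+* Module.End k (R ⊗[k] M) where
  toFun b := LinearMap.lTensor R (actB k B M b)
  map_one' := by ext x m; simp [actB]
  map_mul' b b' := by ext x m; simp [actB, mul_smul]
  map_zero' := by ext x m; simp [actB, TensorProduct.tmul_zero]
  map_add' b b' := by ext x m; simp [actB, add_smul, TensorProduct.tmul_add]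

def moduleBInd : Module B (R ⊗[k] M) := Module.compHom _ (toEndB k R B M)

def towerInd : @IsScalarTower k B (R ⊗[k] M) _ (moduleBInd k R B M).toSMul _ := by
  letI := moduleBInd k R B M
  constructor
  intro c b x
  show toEndB k R B M (c • b) x = c • toEndB k R B M b x
  induction x using TensorProduct.induction_on with
  | zero => rw [map_zero, map_zero]; exact (smul_zero c).symm
  | tmul r m =>
      show r ⊗ₜ[k] ((c • b) • m) = c • (r ⊗ₜ[k] (b • m))
      rw [smul_assoc, TensorProduct.tmul_smul]
  | add x y hx hy => simp only [map_add, smul_add, hx, hy]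

def smulCommInd : @SMulCommClass R B (R ⊗[k] M) _ (moduleBInd k R B M).toSMul := by
  letI := moduleBInd k R B M
  constructor
  intro r b x
  induction x using TensorProduct.induction_on with
  | zero => simp
  | tmul s m =>
      show r • (b • (s ⊗ₜ[k] m)) = b • (r • (s ⊗ₜ[k] m))
      rw [show b • (s ⊗ₜ[k] m) = s ⊗ₜ[k] (b • m) from rfl, TensorProduct.smul_tmul',
        TensorProduct.smul_tmul', show b • ((r • s) ⊗ₜ[k] m) = (r • s) ⊗ₜ[k] (b • m) from rfl]
  | add x y hx hy => simp only [smul_add, hx, hy]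

end Tensor

/-- The induced module `Λ ⊗_{kQ} M ≅ R ⊗[k] M`, as a type synonym carrying the
`Λ = R ⊗[k] B`-module structure combining the two factorwise actions. -/
@[nolint unusedArguments]
def Ind (k : Type) [Field k] (R : Type) [CommRing R] [Algebra k R]
    (B : Type) [Ring B] [Algebra k B]
    (M : Type) [AddCommGroup M] [Module k M] [Module B M] [IsScalarTower k B M] : Type :=
  R ⊗[k] M

section Tensor2
variable (k : Type) [Field k] (R : Type) [CommRing R] [Algebra k R]
  (B : Type) [Ring B] [Algebra k B]
variable (M : Type) [AddCommGroup M] [Module k M] [Module B M] [IsScalarTower k B M]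

instance : AddCommGroup (Ind k R B M) := inferInstanceAs (AddCommGroup (R ⊗[k] M))

instance : Module k (Ind k R B M) := inferInstanceAs (Module k (R ⊗[k] M))

instance : Module (R ⊗[k] B) (Ind k R B M) :=
  @TensorProduct.Algebra.module k R B (R ⊗[k] M) _ _ _ _ _ _ (moduleBInd k R B M) _ _ _
    (towerInd k R B M) (smulCommInd k R B M)

instance : SMulCommClass (R ⊗[k] B) k (Ind k R B M) := by
  letI := moduleBInd k R B M
  haveI := towerInd k R B M
  haveI := smulCommInd k R B M
  constructor
  intro l c x
  show (TensorProduct.Algebra.moduleAux (R := k) (A := R) (B := B) (M := R ⊗[k] M) l)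
        ((c • x : R ⊗[k] M))
      = c • (TensorProduct.Algebra.moduleAux (R := k) (A := R) (B := B) (M := R ⊗[k] M) l)
        (x : R ⊗[k] M)
  exact map_smul _ c x

instance : IsScalarTower k (R ⊗[k] B) (Ind k R B M) := by
  letI := moduleBInd k R B M
  haveI := towerInd k R B M
  haveI := smulCommInd k R B M
  constructor
  intro c l x
  show (TensorProduct.Algebra.moduleAux (R := k) (A := R) (B := B) (M := R ⊗[k] M) (c • l))
        (x : R ⊗[k] M)
      = c • (TensorProduct.Algebra.moduleAux (R := k) (A := R) (B := B) (M := R ⊗[k] M) l)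
        (x : R ⊗[k] M)
  rw [map_smul]
  rfl

end Tensor2


section
variable (k : Type) [Field k] (R : Type) [CommRing R] [Algebra k R]
  (B : Type) [Ring B] [Algebra k B]
variable (M : Type) [AddCommGroup M] [Module k M] [Module B M] [IsScalarTower k B M]

/-- The `R`-module structure on the induced module, by restriction along
`R → R ⊗[k] B`. -/
instance indModuleR : Module R (Ind k R B M) :=
  Module.compHom (Ind k R B M) (algebraMap R (R ⊗[k] B))

end


theorem Ind.induction_on {k : Type} [Field k] {R : Type} [CommRing R] [Algebra k R]
    {B : Type} [Ring B] [Algebra k B]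
    {M : Type} [AddCommGroup M] [Module k M] [Module B M] [IsScalarTower k B M]
    {motive : Ind k R B M → Prop} (x : Ind k R B M) (zero : motive 0)
    (tmul : ∀ (r : R) (m : M), motive (show Ind k R B M from r ⊗ₜ[k] m))
    (add : ∀ x y : Ind k R B M, motive x → motive y → motive (x + y)) : motive x :=
  TensorProduct.induction_on x zero tmul add

section IndLemmas
variable (k : Type) [Field k] (R : Type) [CommRing R] [Algebra k R]
  (B : Type) [Ring B] [Algebra k B]
variable (M : Type) [AddCommGroup M] [Module k M] [Module B M] [IsScalarTower k B M]

lemma toEndB_tmul (b : B) (r : R) (m : M) :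
    toEndB k R B M b (r ⊗ₜ[k] m) = r ⊗ₜ[k] (b • m) := by
  show LinearMap.lTensor R (actB k B M b) (r ⊗ₜ m) = _
  rw [LinearMap.lTensor_tmul]
  rfl

lemma ind_smul_tmul_tmul (a : R) (b : B) (r : R) (m : M) :
    (a ⊗ₜ[k] b : R ⊗[k] B) • (show Ind k R B M from r ⊗ₜ[k] m)
      = (show Ind k R B M from (a * r) ⊗ₜ[k] (b • m)) := by
  letI := moduleBInd k R B M
  haveI := towerInd k R B M
  haveI := smulCommInd k R B M
  show TensorProduct.Algebra.moduleAux (R := k) (A := R) (B := B) (M := R ⊗[k] M)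
      (a ⊗ₜ[k] b) (r ⊗ₜ[k] m) = _
  rw [TensorProduct.Algebra.moduleAux_apply]
  rw [show (b • (r ⊗ₜ[k] m : R ⊗[k] M)) = r ⊗ₜ[k] (b • m) from toEndB_tmul k R B M b r m]
  rw [TensorProduct.smul_tmul', smul_eq_mul]

lemma kB_smul_comm (c : k) (b : B) (m : M) : b • c • m = c • b • m := by
  rw [← IsScalarTower.algebraMap_smul B c m, ← mul_smul, ← Algebra.commutes, mul_smul,
    IsScalarTower.algebraMap_smul, ← IsScalarTower.algebraMap_smul B c (b • m),
    IsScalarTower.algebraMap_smul]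

/-- The `B`-module structure on `Ind k R B M` via the second tensor factor. -/
instance indModuleB : Module B (Ind k R B M) := moduleBInd k R B M

lemma indB_smul_tmul (b : B) (r : R) (m : M) :
    b • (show Ind k R B M from r ⊗ₜ[k] m) = (show Ind k R B M from r ⊗ₜ[k] (b • m)) := by
  show toEndB k R B M b (r ⊗ₜ[k] m) = _
  exact toEndB_tmul k R B M b r m

lemma lambda_smul_eq_indB (b : B) (x : Ind k R B M) :
    ((1 : R) ⊗ₜ[k] b : R ⊗[k] B) • x = b • x := by
  induction x using Ind.induction_on with
  | zero => rw [smul_zero, smul_zero]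
  | tmul r m =>
      rw [ind_smul_tmul_tmul k R B M 1 b r m, indB_smul_tmul k R B M b r m, one_mul]
  | add x y hx hy => rw [smul_add, smul_add, hx, hy]

lemma ind_rsmul (r : R) (x : Ind k R B M) :
    r • x = ((r ⊗ₜ[k] (1 : B) : R ⊗[k] B)) • x := by
  show (algebraMap R (R ⊗[k] B) r) • x = _
  rw [Algebra.TensorProduct.algebraMap_apply]
  norm_num

/-- `Ind k R B M` is `R`-linearly the plain tensor product `R ⊗[k] M`. -/
def indEquivR : Ind k R B M ≃ₗ[R] R ⊗[k] M where
  toFun x := x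
  invFun x := x
  map_add' _ _ := rfl
  left_inv _ := rfl
  right_inv _ := rfl
  map_smul' r x := by
    simp only [RingHom.id_apply]
    rw [ind_rsmul]
    induction x using Ind.induction_on with
    | zero => exact (smul_zero (A := Ind k R B M) _).trans (smul_zero (A := R ⊗[k] M) r).symm
    | tmul s m =>
        rw [show ((r ⊗ₜ[k] (1:B) : R ⊗[k] B) • (show Ind k R B M from s ⊗ₜ[k] m))
            = (show Ind k R B M from (r * s) ⊗ₜ[k] ((1:B) • m)) from
          ind_smul_tmul_tmul k R B M r 1 s m, one_smul]
        rw [TensorProduct.smul_tmul', smul_eq_mul]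
    | add x y hx hy =>
        erw [smul_add, hx, hy]
        exact (smul_add (A := R ⊗[k] M) r x y).symm

section Fin
variable {n : ℕ} (bR : Module.Basis (Fin n) k R)

/-- The `i`-th coordinate contraction `R ⊗[k] M → M` with respect to a basis of `R`,
as a `B`-linear map on `Ind`. -/
def ctr (i : Fin n) : Ind k R B M →ₗ[B] M where
  toFun x := TensorProduct.lift ((LinearMap.lsmul k M).comp (bR.coord i)) x
  map_add' x y := map_add _ x y
  map_smul' b x := by
    simp only [RingHom.id_apply]
    induction x using Ind.induction_on with
    | zero => erw [smul_zero, map_zero, smul_zero]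
    | tmul r m =>
        rw [indB_smul_tmul k R B M b r m]
        show TensorProduct.lift _ (r ⊗ₜ[k] (b • m)) = b • TensorProduct.lift _ (r ⊗ₜ[k] m)
        rw [TensorProduct.lift.tmul, TensorProduct.lift.tmul]
        simp only [LinearMap.comp_apply, LinearMap.lsmul_apply]
        exact (kB_smul_comm k B M _ b m).symm
    | add x y hx hy => erw [smul_add, map_add, hx, hy, map_add, smul_add]

lemma ctr_tmul (i : Fin n) (r : R) (m : M) :
    ctr k R B M bR i (show Ind k R B M from r ⊗ₜ[k] m) = bR.repr r i • m := by
  show TensorProduct.lift _ (r ⊗ₜ[k] m) = _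
  rw [TensorProduct.lift.tmul]
  simp [Module.Basis.coord_apply]

lemma ind_reconstruct (x : Ind k R B M) :
    ∑ i : Fin n, (show Ind k R B M from bR i ⊗ₜ[k] ctr k R B M bR i x) = x := by
  induction x using Ind.induction_on with
  | zero => simp only [map_zero, TensorProduct.tmul_zero, Finset.sum_const_zero]; exact Finset.sum_const_zero
  | tmul r m =>
      have : ∀ i : Fin n, (show Ind k R B M from
          bR i ⊗ₜ[k] ctr k R B M bR i (show Ind k R B M from r ⊗ₜ[k] m))
          = (bR.repr r i • bR i) ⊗ₜ[k] m := by
        intro i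
        rw [ctr_tmul, TensorProduct.tmul_smul, TensorProduct.smul_tmul']
      rw [Finset.sum_congr rfl fun i _ => this i]
      erw [← TensorProduct.sum_tmul]
      congr 1
      exact bR.sum_repr r
  | add x y hx hy =>
      simp only [map_add, TensorProduct.tmul_add]
      erw [Finset.sum_add_distrib]
      show (∑ i, (show Ind k R B M from bR i ⊗ₜ[k] _)) + (∑ i, _) = _
      rw [hx, hy]

/-- `B`-linearly, `Ind k R B M` is a finite direct sum of copies of `M`. -/
def indEquivPi : Ind k R B M ≃ₗ[B] (Fin n → M) where
  toFun x i := ctr k R B M bR i x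
  invFun f := ∑ i : Fin n, (show Ind k R B M from bR i ⊗ₜ[k] f i)
  map_add' x y := by funext i; simp [map_add]
  map_smul' b x := by funext i; simp [map_smul]
  left_inv x := ind_reconstruct k R B M bR x
  right_inv f := by
    funext i
    show ctr k R B M bR i (∑ j : Fin n, (show Ind k R B M from bR j ⊗ₜ[k] f j)) = f i
    rw [map_sum]
    have : ∀ j : Fin n, ctr k R B M bR i (show Ind k R B M from bR j ⊗ₜ[k] f j)
        = if j = i then f j else 0 := by
      intro j
      rw [ctr_tmul, bR.repr_self]
      by_cases h : j = i
      · simp [h]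
      · simp [h, Finsupp.single_apply]
    rw [Finset.sum_congr rfl fun j _ => this j, Finset.sum_ite_eq' Finset.univ i f]
    simp

end Fin

end IndLemmas

/-- Let `Λ = R ⊗[k] B ≅ RQ` with `R` a finite dimensional local
commutative `k`-algebra and `B = kQ` a finite dimensional hereditary `k`-algebra over
the algebraically closed field `k`.  If `M` is an exceptional `B`-module then
`X = Λ ⊗_B M` is an `R`-exceptional `RQ`-lattice: `X` is finitely generated projective
over `R`, `Ext¹_Λ(X, X) = 0`, and `End_Λ(X) ≅ R`. -/
theorem stmt6
    (k : Type) [Field k] [IsAlgClosed k]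
    (R : Type) [CommRing R] [Algebra k R] [IsLocalRing R] [FiniteDimensional k R]
    (B : Type) [Ring B] [Algebra k B] [FiniteDimensional k B]
    (hereditary : ∀ I : Submodule B B, Module.Projective B I)
    (M : Type) [AddCommGroup M] [Module k M] [Module B M] [IsScalarTower k B M]
    [Module.Finite B M]
    (hind : IndecomposableMod B M)
    (hEnd : ∀ f : M →ₗ[B] M, ∃ c : k, ∀ x, f x = c • x)
    (hrig : Ext1Vanishes B M M) :
    Module.Finite R (Ind k R B M) ∧ Module.Projective R (Ind k R B M) ∧
    Ext1Vanishes (R ⊗[k] B) (Ind k R B M) (Ind k R B M) ∧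
    Nonempty (Module.End (R ⊗[k] B) (Ind k R B M) ≃+* R) := by
  classical
  haveI : Module.Finite k M := Module.Finite.trans B M
  set n := Module.finrank k R with hn
  let bR : Module.Basis (Fin n) k R := Module.finBasis k R
  have hfin : Module.Finite R (Ind k R B M) :=
    Module.Finite.equiv (indEquivR k R B M).symm
  have hproj : Module.Projective R (Ind k R B M) :=
    Module.Projective.of_equiv (indEquivR k R B M).symm
  refine ⟨hfin, hproj, ?_, ?_⟩
  · -- Ext¹ vanishing
    intro E _ _ iE pE hiE hpE hrE
    letI : Module B E := Module.compHom E
      ((Algebra.TensorProduct.includeRight : B →ₐ[k] R ⊗[k] B) : B →+* R ⊗[k] B)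
    have EB_smul : ∀ (b : B) (e : E), b • e = ((1:R) ⊗ₜ[k] b : R ⊗[k] B) • e :=
      fun _ _ => rfl
    let iB : Ind k R B M →ₗ[B] E :=
      { toFun := iE
        map_add' := map_add iE
        map_smul' := fun b x => by
          simp only [RingHom.id_apply]
          rw [← lambda_smul_eq_indB k R B M b x, map_smul, EB_smul] }
    let pB : E →ₗ[B] Ind k R B M :=
      { toFun := pE
        map_add' := map_add pE
        map_smul' := fun b e => by
          simp only [RingHom.id_apply]
          rw [← lambda_smul_eq_indB k R B M b (pE e), ← map_smul, EB_smul] }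
    let jmap : M →ₗ[B] Ind k R B M :=
      { toFun := fun m => (show Ind k R B M from (1:R) ⊗ₜ[k] m)
        map_add' := fun a b => TensorProduct.tmul_add 1 a b
        map_smul' := fun b m => by
          simp only [RingHom.id_apply]
          exact (indB_smul_tmul k R B M b 1 m).symm }
    set T : Submodule B (M × E) :=
      LinearMap.ker (jmap ∘ₗ (LinearMap.fst B M E) - pB ∘ₗ (LinearMap.snd B M E)) with hT
    have hTmem : ∀ z : M × E, z ∈ T ↔ jmap z.1 = pB z.2 := by
      intro z
      rw [hT, LinearMap.mem_ker, LinearMap.sub_apply, LinearMap.comp_apply,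
        LinearMap.comp_apply, sub_eq_zero]
      rfl
    let π : T →ₗ[B] M := (LinearMap.fst B M E) ∘ₗ T.subtype
    let ι : Ind k R B M →ₗ[B] T :=
      LinearMap.codRestrict T ((LinearMap.inr B M E) ∘ₗ iB) (by
        intro x
        rw [hTmem]
        show jmap 0 = pB (iE x)
        have hpx : pE (iE x) = 0 := by
          rw [← LinearMap.mem_ker, ← hrE]; exact ⟨x, rfl⟩
        rw [map_zero]
        exact hpx.symm)
    have hι_inj : Function.Injective ι := by
      intro x y hxy
      have h2 : ((ι x : M × E)).2 = ((ι y : M × E)).2 :=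
        congrArg (fun z : T => (z : M × E).2) hxy
      exact hiE h2
    have hπ_surj : Function.Surjective π := by
      intro m
      obtain ⟨e, he⟩ := hpE (jmap m)
      exact ⟨⟨(m, e), (hTmem (m, e)).mpr (by show jmap m = pE e; exact he.symm)⟩, rfl⟩
    have hrangeT : LinearMap.range ι = LinearMap.ker π := by
      ext z
      constructor
      · rintro ⟨x, rfl⟩
        show ((0 : M), iE x).1 = 0
        rfl
      · intro hz
        obtain ⟨⟨m, e⟩, hme⟩ := z
        have hm0 : m = 0 := hz
        subst hm0
        have : pE e = 0 := by
          have := (hTmem (0, e)).mp hme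
          rw [map_zero] at this
          exact this.symm
        rw [← LinearMap.mem_ker, ← hrE] at this
        obtain ⟨x, hx⟩ := this
        refine ⟨x, ?_⟩
        apply Subtype.ext
        show ((0 : M), iE x) = (0, e)
        rw [hx]
    have hv : Ext1Vanishes B M (Ind k R B M) :=
      ext1_of_equiv (ext1_pi hrig n) (indEquivPi k R B M bR)
    obtain ⟨σ, hσ⟩ := hv T ι π hι_inj hπ_surj hrangeT
    let t : M →ₗ[B] E := (LinearMap.snd B M E) ∘ₗ T.subtype ∘ₗ σ
    have hσ1 : ∀ m : M, ((σ m : M × E)).1 = m := by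
      intro m
      have := congrFun (congrArg DFunLike.coe hσ) m
      exact this
    have hpt : ∀ m : M, pE (t m) = (show Ind k R B M from (1:R) ⊗ₜ[k] m) := by
      intro m
      have h1 := (hTmem _).mp (σ m).2
      rw [hσ1 m] at h1
      exact h1.symm
    -- build the Λ-linear section
    letI : Module k E := Module.compHom E (algebraMap k (R ⊗[k] B))
    have kE_smul : ∀ (c : k) (e : E), c • e = (algebraMap k (R ⊗[k] B) c) • e :=
      fun _ _ => rfl
    have key_alg : ∀ (c : k) (r : R),
        (r ⊗ₜ[k] (algebraMap k B c) : R ⊗[k] B)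
          = (algebraMap k (R ⊗[k] B) c) * (r ⊗ₜ[k] (1:B)) := by
      intro c r
      rw [Algebra.TensorProduct.algebraMap_apply, Algebra.TensorProduct.tmul_mul_tmul,
        one_mul, Algebra.algebraMap_eq_smul_one (A := R), smul_mul_assoc, one_mul,
        TensorProduct.smul_tmul, ← Algebra.algebraMap_eq_smul_one]
    let γ : R → (M →ₗ[k] E) := fun r =>
      { toFun := fun m => (r ⊗ₜ[k] (1:B) : R ⊗[k] B) • t m
        map_add' := fun a b => by
          show (r ⊗ₜ[k] (1:B) : R ⊗[k] B) • t (a + b)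
            = (r ⊗ₜ[k] (1:B) : R ⊗[k] B) • t a + (r ⊗ₜ[k] (1:B) : R ⊗[k] B) • t b
          rw [map_add, smul_add]
        map_smul' := fun c m => by
          show (r ⊗ₜ[k] (1:B) : R ⊗[k] B) • t (c • m)
            = c • ((r ⊗ₜ[k] (1:B) : R ⊗[k] B) • t m)
          rw [← IsScalarTower.algebraMap_smul B c m, map_smul, EB_smul, ← mul_smul,
            Algebra.TensorProduct.tmul_mul_tmul, mul_one, one_mul, key_alg, mul_smul,
            ← kE_smul] }
    let β : R →ₗ[k] (M →ₗ[k] E) :=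
      { toFun := γ
        map_add' := fun r r' => by
          apply LinearMap.ext
          intro m
          show ((r + r') ⊗ₜ[k] (1:B) : R ⊗[k] B) • t m
            = (r ⊗ₜ[k] (1:B) : R ⊗[k] B) • t m + (r' ⊗ₜ[k] (1:B) : R ⊗[k] B) • t m
          rw [TensorProduct.add_tmul, add_smul]
        map_smul' := fun c r => by
          apply LinearMap.ext
          intro m
          show ((c • r) ⊗ₜ[k] (1:B) : R ⊗[k] B) • t m
            = c • ((r ⊗ₜ[k] (1:B) : R ⊗[k] B) • t m)
          rw [← TensorProduct.smul_tmul', Algebra.smul_def, mul_smul, ← kE_smul] }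
    let s0 : R ⊗[k] M →ₗ[k] E := TensorProduct.lift β
    have hs0 : ∀ (r : R) (m : M),
        s0 (r ⊗ₜ[k] m) = (r ⊗ₜ[k] (1:B) : R ⊗[k] B) • t m := fun r m => rfl
    have hkey : ∀ (r' : R) (b' : B) (x : Ind k R B M),
        s0 ((r' ⊗ₜ[k] b' : R ⊗[k] B) • x) = (r' ⊗ₜ[k] b' : R ⊗[k] B) • s0 x := by
      intro r' b' x
      induction x using Ind.induction_on with
      | zero => erw [smul_zero, map_zero, smul_zero]
      | tmul r m =>
          rw [ind_smul_tmul_tmul k R B M r' b' r m]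
          rw [show s0 ((show Ind k R B M from (r' * r) ⊗ₜ[k] (b' • m)) : R ⊗[k] M)
              = ((r' * r) ⊗ₜ[k] (1:B) : R ⊗[k] B) • t (b' • m) from hs0 _ _]
          rw [hs0 r m, map_smul, EB_smul, ← mul_smul, ← mul_smul,
            Algebra.TensorProduct.tmul_mul_tmul, Algebra.TensorProduct.tmul_mul_tmul,
            mul_one, one_mul, mul_one]
      | add x y hx hy => erw [smul_add, map_add, hx, hy, map_add, smul_add]
    let s : Ind k R B M →ₗ[R ⊗[k] B] E :=
      { toFun := s0
        map_add' := map_add s0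
        map_smul' := fun l x => by
          simp only [RingHom.id_apply]
          induction l using TensorProduct.induction_on with
          | zero => erw [zero_smul, map_zero, zero_smul]
          | tmul r' b' => exact hkey r' b' x
          | add l l' hl hl' => erw [add_smul, map_add, hl, hl', add_smul] }
    refine ⟨s, ?_⟩
    apply LinearMap.ext
    intro x
    show pE (s0 x) = x
    induction x using Ind.induction_on with
    | zero => exact (congrArg pE (map_zero s0)).trans (map_zero pE)
    | tmul r m =>
        rw [hs0 r m, map_smul, hpt m, ind_smul_tmul_tmul k R B M r 1 1 m, mul_one, one_smul]
    | add x y hx hy => erw [map_add, map_add, hx, hy]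
  · -- End_Λ(X) ≅ R
    haveI : Nontrivial M := hind.1
    obtain ⟨m₀, hm₀⟩ := exists_ne (0 : M)
    have hcomm : ∀ (r : R) (l : R ⊗[k] B),
        (r ⊗ₜ[k] (1:B) : R ⊗[k] B) * l = l * (r ⊗ₜ[k] (1:B)) := by
      intro r l
      have h1 : (r ⊗ₜ[k] (1:B) : R ⊗[k] B) = algebraMap R (R ⊗[k] B) r := by
        rw [Algebra.TensorProduct.algebraMap_apply]
        norm_num
      rw [h1, Algebra.commutes]
    let φ : R →+* Module.End (R ⊗[k] B) (Ind k R B M) :=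
      { toFun := fun r =>
          { toFun := fun x => (r ⊗ₜ[k] (1:B) : R ⊗[k] B) • x
            map_add' := fun x y => smul_add _ x y
            map_smul' := fun l x => by
              simp only [RingHom.id_apply]
              rw [← mul_smul, hcomm, mul_smul] }
        map_one' := by
          apply LinearMap.ext
          intro x
          show ((1:R) ⊗ₜ[k] (1:B) : R ⊗[k] B) • x = x
          rw [← Algebra.TensorProduct.one_def, one_smul]
        map_mul' := fun r s => by
          apply LinearMap.ext
          intro x
          rw [Module.End.mul_apply]
          show ((r * s) ⊗ₜ[k] (1:B) : R ⊗[k] B) • x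
            = (r ⊗ₜ[k] (1:B) : R ⊗[k] B) • ((s ⊗ₜ[k] (1:B) : R ⊗[k] B) • x)
          rw [← mul_smul, Algebra.TensorProduct.tmul_mul_tmul, mul_one]
        map_zero' := by
          apply LinearMap.ext
          intro x
          show ((0:R) ⊗ₜ[k] (1:B) : R ⊗[k] B) • x = 0
          rw [TensorProduct.zero_tmul, zero_smul]
        map_add' := fun r s => by
          apply LinearMap.ext
          intro x
          show ((r + s) ⊗ₜ[k] (1:B) : R ⊗[k] B) • x
            = (r ⊗ₜ[k] (1:B) : R ⊗[k] B) • x + (s ⊗ₜ[k] (1:B) : R ⊗[k] B) • x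
          rw [TensorProduct.add_tmul, add_smul] }
    have hφ_apply : ∀ (r : R) (x : Ind k R B M), φ r x = (r ⊗ₜ[k] (1:B) : R ⊗[k] B) • x :=
      fun _ _ => rfl
    have hinj0 : ∀ r : R, φ r = 0 → r = 0 := by
      intro r h0
      have h1 : (show Ind k R B M from r ⊗ₜ[k] m₀) = 0 := by
        have h2 : φ r (show Ind k R B M from (1:R) ⊗ₜ[k] m₀) = 0 := by
          rw [h0]; rfl
        rw [hφ_apply, ind_smul_tmul_tmul k R B M r 1 1 m₀, mul_one, one_smul] at h2
        exact h2
      have h3 : ∀ i : Fin n, bR.repr r i • m₀ = 0 := by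
        intro i
        have h4 := congrArg (ctr k R B M bR i) h1
        rw [ctr_tmul, map_zero] at h4
        exact h4
      have h5 : ∀ i : Fin n, bR.repr r i = 0 := by
        intro i
        rcases smul_eq_zero.mp (h3 i) with h | h
        · exact h
        · exact absurd h hm₀
      have h6 := bR.sum_repr r
      rw [Finset.sum_congr rfl (fun i _ => by rw [h5 i, zero_smul])] at h6
      rw [← h6, Finset.sum_const_zero]
    have hφ_inj : Function.Injective φ := by
      intro a b hab
      have : φ (a - b) = 0 := by rw [map_sub, hab, sub_self]
      have := hinj0 _ this
      exact sub_eq_zero.mp this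
    have hφ_surj : Function.Surjective φ := by
      intro f
      have hfB : ∀ (b : B) (x : Ind k R B M), f (b • x) = b • f x := by
        intro b x
        rw [← lambda_smul_eq_indB k R B M b x, map_smul, lambda_smul_eq_indB]
      let g : Fin n → (M →ₗ[B] M) := fun i =>
        { toFun := fun m => ctr k R B M bR i (f (show Ind k R B M from (1:R) ⊗ₜ[k] m))
          map_add' := fun a b => by
            show ctr k R B M bR i (f (show Ind k R B M from (1:R) ⊗ₜ[k] (a + b))) = _
            rw [show (show Ind k R B M from (1:R) ⊗ₜ[k] (a + b))
                = (show Ind k R B M from (1:R) ⊗ₜ[k] a) + (show Ind k R B M from (1:R) ⊗ₜ[k] b)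
              from TensorProduct.tmul_add 1 a b, map_add, map_add]
          map_smul' := fun b m => by
            simp only [RingHom.id_apply]
            show ctr k R B M bR i (f (show Ind k R B M from (1:R) ⊗ₜ[k] (b • m))) = _
            rw [← indB_smul_tmul k R B M b 1 m, hfB, map_smul] }
      choose c hc using fun i => hEnd (g i)
      refine ⟨∑ i : Fin n, c i • bR i, ?_⟩
      set r : R := ∑ i : Fin n, c i • bR i with hr
      apply LinearMap.ext
      intro x
      induction x using Ind.induction_on with
      | zero => erw [map_zero, map_zero]
      | tmul r' m =>
          have hf1 : f (show Ind k R B M from (1:R) ⊗ₜ[k] m) = (show Ind k R B M from r ⊗ₜ[k] m) := by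
            conv_lhs => rw [← ind_reconstruct k R B M bR (f (show Ind k R B M from (1:R) ⊗ₜ[k] m))]
            have heach : ∀ i : Fin n,
                (show Ind k R B M from
                  bR i ⊗ₜ[k] ctr k R B M bR i (f (show Ind k R B M from (1:R) ⊗ₜ[k] m)))
                = (show Ind k R B M from (c i • bR i) ⊗ₜ[k] m) := by
              intro i
              rw [show ctr k R B M bR i (f (show Ind k R B M from (1:R) ⊗ₜ[k] m)) = c i • m
                from hc i m]
              rw [TensorProduct.tmul_smul, TensorProduct.smul_tmul']
            erw [Finset.sum_congr rfl fun i _ => heach i, ← TensorProduct.sum_tmul]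
          have hx1 : (show Ind k R B M from r' ⊗ₜ[k] m)
              = (r' ⊗ₜ[k] (1:B) : R ⊗[k] B) • (show Ind k R B M from (1:R) ⊗ₜ[k] m) := by
            rw [ind_smul_tmul_tmul k R B M r' 1 1 m, mul_one, one_smul]
          show φ r (show Ind k R B M from r' ⊗ₜ[k] m) = f (show Ind k R B M from r' ⊗ₜ[k] m)
          rw [hφ_apply, ind_smul_tmul_tmul k R B M r 1 r' m, one_smul]
          rw [hx1, map_smul, hf1, ind_smul_tmul_tmul k R B M r' 1 r m, one_smul, mul_comm]
      | add x y hx hy => erw [map_add, map_add, hx, hy]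
    exact ⟨(RingEquiv.ofBijective φ ⟨hφ_inj, hφ_surj⟩).symm⟩
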